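/- For every 1 ≤ k ≤ n and all vertices i, j ∈ Fin n, the restricted shortest-path distance satisfies the Floyd–Warshall recurrence d_k(i,j) = min( d_{k-1}(i,j), d_{k-1}(i, k-1) + d_{k-1}(k-1, j) ), where the (k)-th vertex is the one with index k−1 and addition and minimum are taken in ℝ≥0∞. -/

import Mathlib

/-! Every walk allowed at level `k - 1` is allowed at level `k`, and two walks allowed at
level `k - 1` that meet at the vertex `k - 1` concatenate to a walk allowed at level `k`; this
gives `d_k ≤ min …`. Conversely, a walk allowed at level `k` either avoids `k - 1` in its
interior, or it can be cut at an interior visit to `k - 1` into two strictly shorter walks allowed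
at level `k`. By strong induction on the length, each piece weighs at least the
`(k - 1)`-distance between its endpoints, since `d_{k-1}(k - 1, k - 1) = 0` collapses the
minimum for walks ending or starting at `k - 1`. -/

open scoped ENNReal BigOperators

noncomputable def walkWeight {n : ℕ} (w : Fin n → Fin n → ℝ≥0∞) {m : ℕ}
    (v : Fin (m + 1) → Fin n) : ℝ≥0∞ :=
  ∑ t : Fin m, w (v t.castSucc) (v t.succ)

noncomputable def dRestr (n : ℕ) (w : Fin n → Fin n → ℝ≥0∞) (k : ℕ) (i j : Fin n) : ℝ≥0∞ :=
  ⨅ (m : ℕ) (v : Fin (m + 1) → Fin n) (_ : v 0 = i) (_ : v (Fin.last m) = j)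
    (_ : ∀ t : Fin (m + 1), 0 < (t : ℕ) → (t : ℕ) < m → ((v t : ℕ) < k)),
    walkWeight w v

section Walks

variable {α : Type*} {a b m m₁ m₂ : ℕ}

def walkTake (v : Fin (m + 1) → α) (hab : a + b = m) : Fin (a + 1) → α :=
  fun s => v ⟨s, by omega⟩

def walkDrop (v : Fin (m + 1) → α) (hab : a + b = m) : Fin (b + 1) → α :=
  fun s => v ⟨a + s, by omega⟩

def walkAppend (v₁ : Fin (m₁ + 1) → α) (v₂ : Fin (m₂ + 1) → α) : Fin (m₁ + m₂ + 1) → α :=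
  fun t => if h : (t : ℕ) ≤ m₁ then v₁ ⟨t, by omega⟩ else v₂ ⟨t - m₁, by omega⟩

lemma walkTake_zero (v : Fin (m + 1) → α) (hab : a + b = m) : walkTake v hab 0 = v 0 := rfl

lemma walkTake_last (v : Fin (m + 1) → α) (hab : a + b = m) :
    walkTake v hab (Fin.last a) = v ⟨a, by omega⟩ := rfl

lemma walkDrop_zero (v : Fin (m + 1) → α) (hab : a + b = m) :
    walkDrop v hab 0 = v ⟨a, by omega⟩ := rfl

lemma walkDrop_last (v : Fin (m + 1) → α) (hab : a + b = m) :
    walkDrop v hab (Fin.last b) = v (Fin.last m) := by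
  simp only [walkDrop, Fin.val_last, hab]
  rfl

lemma walkAppend_of_le (v₁ : Fin (m₁ + 1) → α) (v₂ : Fin (m₂ + 1) → α) {s : ℕ}
    (hs : s < m₁ + m₂ + 1) (h : s ≤ m₁) : walkAppend v₁ v₂ ⟨s, hs⟩ = v₁ ⟨s, by omega⟩ :=
  dif_pos h

lemma walkAppend_of_ge {v₁ : Fin (m₁ + 1) → α} {v₂ : Fin (m₂ + 1) → α}
    (hv : v₁ (Fin.last m₁) = v₂ 0) {s : ℕ} (hs : s < m₁ + m₂ + 1) (h : m₁ ≤ s) :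
    walkAppend v₁ v₂ ⟨s, hs⟩ = v₂ ⟨s - m₁, by omega⟩ := by
  rcases h.eq_or_lt with rfl | h
  · rw [walkAppend_of_le v₁ v₂ hs le_rfl, ← Fin.last, hv]
    simp only [Nat.sub_self, Fin.zero_eta]
  · exact dif_neg (Nat.not_le.mpr h)

lemma walkAppend_zero (v₁ : Fin (m₁ + 1) → α) (v₂ : Fin (m₂ + 1) → α) :
    walkAppend v₁ v₂ 0 = v₁ 0 :=
  walkAppend_of_le v₁ v₂ _ (Nat.zero_le _)

lemma walkAppend_last {v₁ : Fin (m₁ + 1) → α} {v₂ : Fin (m₂ + 1) → α}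
    (hv : v₁ (Fin.last m₁) = v₂ 0) :
    walkAppend v₁ v₂ (Fin.last (m₁ + m₂)) = v₂ (Fin.last m₂) := by
  rw [Fin.last, walkAppend_of_ge hv _ (Nat.le_add_right _ _)]
  simp only [Nat.add_sub_cancel_left]
  rfl

lemma walkTake_walkAppend (v₁ : Fin (m₁ + 1) → α) (v₂ : Fin (m₂ + 1) → α) :
    walkTake (walkAppend v₁ v₂) rfl = v₁ :=
  funext fun s => walkAppend_of_le v₁ v₂ _ (Nat.lt_succ_iff.mp s.isLt)

lemma walkDrop_walkAppend {v₁ : Fin (m₁ + 1) → α} {v₂ : Fin (m₂ + 1) → α}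
    (hv : v₁ (Fin.last m₁) = v₂ 0) : walkDrop (walkAppend v₁ v₂) rfl = v₂ :=
  funext fun s => by
    rw [walkDrop, walkAppend_of_ge hv _ (Nat.le_add_right _ _)]
    simp only [Nat.add_sub_cancel_left]

end Walks

section Interior

variable {n a b m m₁ m₂ : ℕ}

def InteriorBelow (K : ℕ) (v : Fin (m + 1) → Fin n) : Prop :=
  ∀ t : Fin (m + 1), 0 < (t : ℕ) → (t : ℕ) < m → (v t : ℕ) < K

lemma InteriorBelow.mono {K K' : ℕ} {v : Fin (m + 1) → Fin n} (hv : InteriorBelow K v)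
    (h : K ≤ K') : InteriorBelow K' v :=
  fun t ht₀ htm => (hv t ht₀ htm).trans_le h

lemma InteriorBelow.walkTake {K : ℕ} {v : Fin (m + 1) → Fin n} (hv : InteriorBelow K v)
    (hab : a + b = m) : InteriorBelow K (walkTake v hab) :=
  fun s hs₀ hsa => hv _ hs₀ (by simp only; omega)

lemma InteriorBelow.walkDrop {K : ℕ} {v : Fin (m + 1) → Fin n} (hv : InteriorBelow K v)
    (hab : a + b = m) : InteriorBelow K (walkDrop v hab) :=
  fun s hs₀ hsb => hv _ (by simp only; omega) (by simp only; omega)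

lemma InteriorBelow.walkAppend {K : ℕ} {v₁ : Fin (m₁ + 1) → Fin n} {v₂ : Fin (m₂ + 1) → Fin n}
    (hv₁ : InteriorBelow K v₁) (hv₂ : InteriorBelow K v₂) (hv : v₁ (Fin.last m₁) = v₂ 0)
    (hK : (v₂ 0 : ℕ) < K) : InteriorBelow K (walkAppend v₁ v₂) := by
  rintro ⟨t, ht⟩ (ht₀ : 0 < t) (htm : t < m₁ + m₂)
  rcases lt_trichotomy t m₁ with h | rfl | h
  · rw [walkAppend_of_le v₁ v₂ ht h.le]
    exact hv₁ _ ht₀ h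
  · rwa [walkAppend_of_le v₁ v₂ ht le_rfl, ← Fin.last, hv]
  · rw [walkAppend_of_ge hv ht h.le]
    exact hv₂ _ (by simp only; omega) (by simp only; omega)

lemma InteriorBelow.exists_eq_of_succ {K : ℕ} {v : Fin (m + 1) → Fin n}
    (hv : InteriorBelow (K + 1) v) (hv' : ¬ InteriorBelow K v) :
    ∃ t : Fin (m + 1), 0 < (t : ℕ) ∧ (t : ℕ) < m ∧ (v t : ℕ) = K := by
  simp only [InteriorBelow, not_forall, not_lt] at hv'
  obtain ⟨t, ht₀, htm, hK⟩ := hv'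
  exact ⟨t, ht₀, htm, by have := hv t ht₀ htm; omega⟩

end Interior

section Weight

variable {n a b m m₁ m₂ : ℕ} (w : Fin n → Fin n → ℝ≥0∞)

lemma walkWeight_eq_walkTake_add_walkDrop (v : Fin (m + 1) → Fin n) (hab : a + b = m) :
    walkWeight w v = walkWeight w (walkTake v hab) + walkWeight w (walkDrop v hab) := by
  subst hab
  exact Fin.sum_univ_add _

lemma walkWeight_walkAppend {v₁ : Fin (m₁ + 1) → Fin n} {v₂ : Fin (m₂ + 1) → Fin n}
    (hv : v₁ (Fin.last m₁) = v₂ 0) :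
    walkWeight w (walkAppend v₁ v₂) = walkWeight w v₁ + walkWeight w v₂ := by
  rw [walkWeight_eq_walkTake_add_walkDrop w _ rfl, walkTake_walkAppend, walkDrop_walkAppend hv]

end Weight

section Restricted

variable {n : ℕ} (w : Fin n → Fin n → ℝ≥0∞)

lemma dRestr_le_walkWeight {K m : ℕ} {v : Fin (m + 1) → Fin n} (hv : InteriorBelow K v) :
    dRestr n w K (v 0) (v (Fin.last m)) ≤ walkWeight w v :=
  iInf_le_of_le m <| iInf_le_of_le v <| iInf_le_of_le rfl <| iInf_le_of_le rfl <| iInf_le _ hv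

lemma le_dRestr {K : ℕ} {i j : Fin n} {d : ℝ≥0∞}
    (h : ∀ (m : ℕ) (v : Fin (m + 1) → Fin n), v 0 = i → v (Fin.last m) = j →
      InteriorBelow K v → d ≤ walkWeight w v) :
    d ≤ dRestr n w K i j :=
  le_iInf fun m => le_iInf fun v => le_iInf fun h₀ => le_iInf fun hₗ => le_iInf (h m v h₀ hₗ)

lemma dRestr_antitone (i j : Fin n) : Antitone fun K => dRestr n w K i j :=
  fun _ _ hK => le_dRestr w fun _ _ h₀ hₗ hv => h₀ ▸ hₗ ▸ dRestr_le_walkWeight w (hv.mono hK)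

lemma dRestr_self (K : ℕ) (x : Fin n) : dRestr n w K x x = 0 :=
  nonpos_iff_eq_zero.mp <| by
    simpa [walkWeight] using dRestr_le_walkWeight w (m := 0) (K := K) (v := fun _ => x)
      (fun _ _ h => absurd h (Nat.not_lt_zero _))

lemma dRestr_le_add {K : ℕ} (i x j : Fin n) (hx : (x : ℕ) < K) :
    dRestr n w K i j ≤ dRestr n w K i x + dRestr n w K x j := by
  conv_rhs => simp only [dRestr]
  simp only [ENNReal.iInf_add, ENNReal.add_iInf, le_iInf_iff]
  rintro m₂ v₂ rfl rfl hv₂ m₁ v₁ rfl hv hv₁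
  rw [← walkWeight_walkAppend w hv]
  have := dRestr_le_walkWeight w (InteriorBelow.walkAppend hv₁ hv₂ hv hx)
  rwa [walkAppend_zero, walkAppend_last hv] at this

lemma min_dRestr_le_walkWeight {K : ℕ} {c : Fin n} (hc : (c : ℕ) = K) {m : ℕ}
    (v : Fin (m + 1) → Fin n) (hv : InteriorBelow (K + 1) v) :
    min (dRestr n w K (v 0) (v (Fin.last m)))
      (dRestr n w K (v 0) c + dRestr n w K c (v (Fin.last m))) ≤ walkWeight w v := by
  induction m using Nat.strong_induction_on with
  | _ m ih =>
  by_cases hK : InteriorBelow K v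
  · exact (min_le_left _ _).trans (dRestr_le_walkWeight w hK)
  obtain ⟨t, ht₀, htm, htc⟩ := hv.exists_eq_of_succ hK
  have hvt : v t = c := Fin.ext (htc.trans hc.symm)
  have hsplit : (t : ℕ) + (m - t) = m := by omega
  have hpre := ih t htm (walkTake v hsplit) (hv.walkTake hsplit)
  have hsuf := ih (m - t) (by omega) (walkDrop v hsplit) (hv.walkDrop hsplit)
  rw [walkTake_zero, walkTake_last, Fin.eta, hvt, dRestr_self, add_zero, min_self] at hpre
  rw [walkDrop_zero, walkDrop_last, Fin.eta, hvt, dRestr_self, zero_add, min_self] at hsuf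
  rw [walkWeight_eq_walkTake_add_walkDrop w v hsplit]
  exact (min_le_right _ _).trans (add_le_add hpre hsuf)

end Restricted

/-- The Floyd–Warshall recurrence: for `1 ≤ k ≤ n`,
`d_k(i,j) = min (d_{k-1}(i,j)) (d_{k-1}(i,k-1) + d_{k-1}(k-1,j))`,
where the `k`-th vertex is the one with index `k-1`. -/
theorem floyd_warshall_recurrence (n : ℕ) (w : Fin n → Fin n → ℝ≥0∞)
    (k : ℕ) (hk1 : 1 ≤ k) (hkn : k ≤ n) (i j : Fin n) :
    dRestr n w k i j =
      min (dRestr n w (k - 1) i j)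
        (dRestr n w (k - 1) i ⟨k - 1, by omega⟩ +
          dRestr n w (k - 1) ⟨k - 1, by omega⟩ j) := by
  set c : Fin n := ⟨k - 1, by omega⟩
  have hk : k - 1 ≤ k := Nat.sub_le k 1
  refine le_antisymm (le_min (dRestr_antitone w i j hk) ?_) ?_
  · calc dRestr n w k i j ≤ dRestr n w k i c + dRestr n w k c j :=
          dRestr_le_add w i c j (by simp only [c]; omega)
      _ ≤ _ := add_le_add (dRestr_antitone w i c hk) (dRestr_antitone w c j hk)
  · refine le_dRestr w fun m v h₀ hₗ hv => ?_
    subst h₀ hₗ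
    exact min_dRestr_le_walkWeight w (K := k - 1) rfl v
      (InteriorBelow.mono (K := k) hv (by omega))
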